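/- The number of (r,s)-colorings of K equals the sum over T in the lattice L^s(K) of μ(∅, T)·r^{|π(T)|}, where μ is the Möbius function of L^s(K) and |π(T)| = (number of connected components of T) + |V(K)| − |V(T)|. -/
import Mathlib


open Finset

/-- The number of (r,s)-colorings of the simplicial complex `K` on vertex set `V`:
maps `V → Fin r` with no monochrome s-simplex. -/
noncomputable def chromCount {V : Type*} [Fintype V] (K : Finset (Finset V)) (r s : ℕ) : ℕ :=
  Nat.card {col : V → Fin r // ∀ σ ∈ K, σ.card = s + 1 → ¬ ∃ c, ∀ v ∈ σ, col v = c}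

/-- `simpStirling K i s` : the number of partitions of the vertex set into `i`
s-independent blocks (blocks containing no s-simplex of `K`). -/
noncomputable def simpStirling {V : Type*} [Fintype V] [DecidableEq V]
    (K : Finset (Finset V)) (i s : ℕ) : ℕ :=
  Nat.card {P : Finpartition (Finset.univ : Finset V) //
    P.parts.card = i ∧ ∀ B ∈ P.parts, ∀ σ ∈ K, σ.card = s + 1 → ¬ σ ⊆ B}
/-- The vertex set `V(S) = ⋃ S` of a set `S` of simplices. -/
def vertSet {V : Type*} (S : Set (Finset V)) : Set V := ⋃ σ ∈ S, (σ : Set V)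

/-- A set `S` of s-simplices of `K` is closed if it contains every s-simplex of `K`
whose vertices all lie in `V(S)`. -/
def IsClosedSet {V : Type*} (K : Finset (Finset V)) (s : ℕ) (S : Set (Finset V)) : Prop :=
  ∀ σ ∈ K, σ.card = s + 1 → (σ : Set V) ⊆ vertSet S → σ ∈ S

/-- The relation on simplices of `S` of having nonempty intersection. -/
def simpRel {V : Type*} [DecidableEq V] (S : Set (Finset V)) (a b : Finset V) : Prop :=
  a ∈ S ∧ b ∈ S ∧ (a ∩ b).Nonempty

/-- `S0` is a connected component of `S`: an equivalence class of the smallest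
equivalence relation on `S` generated by nonempty pairwise intersection. -/
def IsComponent {V : Type*} [DecidableEq V] (S S0 : Set (Finset V)) : Prop :=
  ∃ σ₀ ∈ S, S0 = {τ | τ ∈ S ∧ Relation.EqvGen (simpRel S) σ₀ τ}

/-- The set of s-simplices of `K`, as a set. -/
def sSimplices {V : Type*} (K : Finset (Finset V)) (s : ℕ) : Set (Finset V) :=
  {σ : Finset V | σ ∈ K ∧ σ.card = s + 1}

/-- The s-chromatic lattice: subsets of `F^s(K)` all of whose connected components
are closed. -/
def LsK {V : Type*} [DecidableEq V] (K : Finset (Finset V)) (s : ℕ) : Set (Set (Finset V)) :=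
  {S | S ⊆ sSimplices K s ∧ ∀ S0, IsComponent S S0 → IsClosedSet K s S0}

/-- The number of blocks `|π(T)|` of the partition of `V(K)` induced by `T`:
the number of connected components of `T` plus the number of vertices outside
`V(T)` (as singleton blocks). -/
noncomputable def piCard {V : Type*} [Fintype V] [DecidableEq V]
    (T : Set (Finset V)) : ℕ :=
  Set.ncard {S0 : Set (Finset V) | IsComponent T S0} +
    (Fintype.card V - (vertSet T).ncard)


set_option linter.unusedSectionVars false


section Aux
variable {V : Type*} [DecidableEq V]

lemma mem_vertSet {S : Set (Finset V)} {v : V} :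
    v ∈ vertSet S ↔ ∃ σ ∈ S, v ∈ σ := by
  simp [vertSet]

/-- The component of `T` containing a simplex `σ`. -/
def compOf (T : Set (Finset V)) (σ : Finset V) : Set (Finset V) :=
  {τ | τ ∈ T ∧ Relation.EqvGen (simpRel T) σ τ}

lemma isComponent_compOf {T : Set (Finset V)} {σ : Finset V} (h : σ ∈ T) :
    IsComponent T (compOf T σ) := ⟨σ, h, rfl⟩

lemma mem_compOf_self {T : Set (Finset V)} {σ : Finset V} (h : σ ∈ T) :
    σ ∈ compOf T σ := ⟨h, Relation.EqvGen.refl σ⟩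

lemma compOf_eq_of_eqvGen {T : Set (Finset V)} {σ σ' : Finset V}
    (h : Relation.EqvGen (simpRel T) σ σ') : compOf T σ = compOf T σ' := by
  ext τ
  constructor
  · rintro ⟨hτ, hr⟩; exact ⟨hτ, (Relation.EqvGen.symm _ _ h).trans _ _ _ hr⟩
  · rintro ⟨hτ, hr⟩; exact ⟨hτ, h.trans _ _ _ hr⟩

lemma component_subset {T S0 : Set (Finset V)} (h : IsComponent T S0) : S0 ⊆ T := by
  obtain ⟨σ₀, -, rfl⟩ := h
  intro τ hτ; exact hτ.1

/-- Two components sharing a vertex are equal. -/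
lemma component_eq_of_shared {T S0 S1 : Set (Finset V)}
    (h0 : IsComponent T S0) (h1 : IsComponent T S1)
    {v : V} (hv0 : v ∈ vertSet S0) (hv1 : v ∈ vertSet S1) : S0 = S1 := by
  obtain ⟨σ₀, hσ₀, rfl⟩ := h0
  obtain ⟨σ₁, hσ₁, rfl⟩ := h1
  obtain ⟨τ₀, hτ₀, hvτ₀⟩ := mem_vertSet.1 hv0
  obtain ⟨τ₁, hτ₁, hvτ₁⟩ := mem_vertSet.1 hv1
  have hrel : simpRel T τ₀ τ₁ := ⟨hτ₀.1, hτ₁.1, ⟨v, Finset.mem_inter.2 ⟨hvτ₀, hvτ₁⟩⟩⟩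
  have h01 : Relation.EqvGen (simpRel T) σ₀ σ₁ :=
    (hτ₀.2.trans _ _ _ (Relation.EqvGen.rel _ _ hrel)).trans _ _ _ (hτ₁.2.symm _ _)
  exact compOf_eq_of_eqvGen h01

end Aux

section Aux2
variable {V : Type*} [DecidableEq V]

/-- `σ` is monochrome under `col`. -/
def MonoE {r : ℕ} (col : V → Fin r) (σ : Finset V) : Prop := ∃ c, ∀ v ∈ σ, col v = c

lemma mono_chain {T : Set (Finset V)} {r : ℕ} {col : V → Fin r}
    (hne : ∀ σ ∈ T, σ.Nonempty) (hmono : ∀ σ ∈ T, MonoE col σ)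
    {a b : Finset V} (h : Relation.EqvGen (simpRel T) a b) :
    a = b ∨ (a ∈ T ∧ b ∈ T ∧ ∀ v ∈ a, ∀ w ∈ b, col v = col w) := by
  induction h with
  | rel a b hab =>
    obtain ⟨ha, hb, u, hu⟩ := hab
    obtain ⟨ca, hca⟩ := hmono a ha
    obtain ⟨cb, hcb⟩ := hmono b hb
    right
    refine ⟨ha, hb, fun v hv w hw => ?_⟩
    rw [hca v hv, hcb w hw, ← hca u (Finset.mem_inter.1 hu).1,
      hcb u (Finset.mem_inter.1 hu).2]
  | refl a => exact Or.inl rfl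
  | symm a b _ ih =>
    rcases ih with rfl | ⟨ha, hb, hcol⟩
    · exact Or.inl rfl
    · exact Or.inr ⟨hb, ha, fun v hv w hw => (hcol w hw v hv).symm⟩
  | trans a b c _ _ ih1 ih2 =>
    rcases ih1 with rfl | ⟨ha, hb, h1⟩
    · exact ih2
    rcases ih2 with rfl | ⟨-, hc, h2⟩
    · exact Or.inr ⟨ha, hb, h1⟩
    obtain ⟨u, hu⟩ := hne b hb
    exact Or.inr ⟨ha, hc, fun v hv w hw => (h1 v hv u hu).trans (h2 u hu w hw)⟩

/-- colors agree across a component of a mono set. -/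
lemma const_on_component {T S0 : Set (Finset V)} {r : ℕ} {col : V → Fin r}
    (hne : ∀ σ ∈ T, σ.Nonempty) (hmono : ∀ σ ∈ T, MonoE col σ)
    (hS0 : IsComponent T S0) {v w : V} (hv : v ∈ vertSet S0) (hw : w ∈ vertSet S0) :
    col v = col w := by
  obtain ⟨σ₀, hσ₀, rfl⟩ := hS0
  obtain ⟨τv, hτv, hvv⟩ := mem_vertSet.1 hv
  obtain ⟨τw, hτw, hww⟩ := mem_vertSet.1 hw
  have h : Relation.EqvGen (simpRel T) τv τw := (hτv.2.symm _ _).trans _ _ _ hτw.2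
  rcases mono_chain hne hmono h with rfl | ⟨-, -, hcol⟩
  · obtain ⟨c, hc⟩ := hmono τv hτv.1
    rw [hc v hvv, hc w hww]
  · exact hcol v hvv w hww

end Aux2

section Aux3
variable {V : Type*} [DecidableEq V]

/-- The set of monochrome s-simplices of a coloring. -/
def Tcol (K : Finset (Finset V)) (s r : ℕ) (col : V → Fin r) : Set (Finset V) :=
  {σ | σ ∈ K ∧ σ.card = s + 1 ∧ MonoE col σ}

lemma Tcol_subset {K : Finset (Finset V)} {s r : ℕ} {col : V → Fin r} :
    Tcol K s r col ⊆ sSimplices K s := fun σ hσ => ⟨hσ.1, hσ.2.1⟩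

lemma nonempty_of_sSimplices {K : Finset (Finset V)} {s : ℕ} {σ : Finset V}
    (h : σ ∈ sSimplices K s) : σ.Nonempty :=
  Finset.card_pos.1 (by rw [h.2]; omega)

lemma Tcol_mem_LsK {K : Finset (Finset V)} {s r : ℕ} {col : V → Fin r} :
    Tcol K s r col ∈ LsK K s := by
  refine ⟨Tcol_subset, ?_⟩
  intro S0 hS0 σ hσK hσcard hσsub
  set T := Tcol K s r col with hT
  have hne : ∀ τ ∈ T, τ.Nonempty := fun τ hτ => nonempty_of_sSimplices (Tcol_subset hτ)
  have hmono : ∀ τ ∈ T, MonoE col τ := fun τ hτ => hτ.2.2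
  -- σ is monochrome: all vertices lie in vertSet S0, where col is constant
  obtain ⟨v₀, hv₀⟩ : σ.Nonempty := Finset.card_pos.1 (by omega)
  have hconst : ∀ v ∈ σ, col v = col v₀ := fun v hv =>
    const_on_component hne hmono hS0 (hσsub hv) (hσsub hv₀)
  have hσT : σ ∈ T := ⟨hσK, hσcard, col v₀, hconst⟩
  -- now show σ ∈ S0
  obtain ⟨σ₀, hσ₀, rfl⟩ := hS0
  obtain ⟨τ, hτ, hv₀τ⟩ := mem_vertSet.1 (hσsub hv₀)
  refine ⟨hσT, hτ.2.trans _ _ _ (Relation.EqvGen.rel _ _ ?_)⟩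
  exact ⟨hτ.1, hσT, v₀, Finset.mem_inter.2 ⟨hv₀τ, hv₀⟩⟩

lemma empty_mem_LsK {K : Finset (Finset V)} {s : ℕ} : (∅ : Set (Finset V)) ∈ LsK K s := by
  refine ⟨Set.empty_subset _, ?_⟩
  rintro S0 ⟨σ₀, hσ₀, -⟩
  exact absurd hσ₀ (Set.notMem_empty σ₀)

/-- `T ⊆ Tcol col` iff every simplex of `T` is monochrome, for `T ⊆ sSimplices`. -/
lemma subset_Tcol_iff {K : Finset (Finset V)} {s r : ℕ} {col : V → Fin r}
    {T : Set (Finset V)} (hT : T ⊆ sSimplices K s) :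
    T ⊆ Tcol K s r col ↔ ∀ σ ∈ T, MonoE col σ := by
  constructor
  · exact fun h σ hσ => (h hσ).2.2
  · exact fun h σ hσ => ⟨(hT hσ).1, (hT hσ).2, h σ hσ⟩

end Aux3

section Count
variable {V : Type*} [Fintype V] [DecidableEq V]

lemma vertSet_mono {S T : Set (Finset V)} (h : S ⊆ T) : vertSet S ⊆ vertSet T := by
  intro v hv
  obtain ⟨σ, hσ, hvσ⟩ := mem_vertSet.1 hv
  exact mem_vertSet.2 ⟨σ, h hσ, hvσ⟩

open Classical in
/-- The quotient map sending each vertex to its component (or itself if uncovered). -/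
noncomputable def qmap (T : Set (Finset V)) (v : V) :
    {S0 : Set (Finset V) // IsComponent T S0} ⊕ {v : V // v ∉ vertSet T} :=
  if h : v ∈ vertSet T then
    Sum.inl ⟨compOf T (mem_vertSet.1 h).choose,
      isComponent_compOf (mem_vertSet.1 h).choose_spec.1⟩
  else Sum.inr ⟨v, h⟩

lemma qmap_eq_inl {T S0 : Set (Finset V)} (hS0 : IsComponent T S0) {v : V}
    (hv : v ∈ vertSet S0) :
    qmap T v = Sum.inl ⟨S0, hS0⟩ := by
  classical
  have hvT : v ∈ vertSet T := vertSet_mono (component_subset hS0) hv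
  rw [qmap, dif_pos hvT]
  congr 1
  have h1 := (mem_vertSet.1 hvT).choose_spec
  refine Subtype.ext ?_
  refine component_eq_of_shared (isComponent_compOf h1.1) hS0 ?_ hv
  exact mem_vertSet.2 ⟨_, mem_compOf_self h1.1, h1.2⟩

lemma qmap_eq_inr {T : Set (Finset V)} {v : V} (hv : v ∉ vertSet T) :
    qmap T v = Sum.inr ⟨v, hv⟩ := by
  rw [qmap, dif_neg hv]

lemma qmap_surjective {K : Finset (Finset V)} {s : ℕ} {T : Set (Finset V)}
    (hT : T ⊆ sSimplices K s) : Function.Surjective (qmap T) := by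
  rintro (⟨S0, hS0⟩ | ⟨v, hv⟩)
  · obtain ⟨σ₀, hσ₀, rfl⟩ := hS0
    obtain ⟨v, hvσ⟩ := nonempty_of_sSimplices (hT hσ₀)
    exact ⟨v, qmap_eq_inl ⟨σ₀, hσ₀, rfl⟩ (mem_vertSet.2 ⟨σ₀, mem_compOf_self hσ₀, hvσ⟩)⟩
  · exact ⟨v, qmap_eq_inr hv⟩

lemma mono_comp_qmap {T : Set (Finset V)} {r : ℕ}
    (f : ({S0 : Set (Finset V) // IsComponent T S0} ⊕ {v : V // v ∉ vertSet T}) → Fin r) :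
    ∀ σ ∈ T, MonoE (f ∘ qmap T) σ := by
  intro σ hσ
  refine ⟨f (Sum.inl ⟨compOf T σ, isComponent_compOf hσ⟩), fun v hv => ?_⟩
  have h : qmap T v = Sum.inl ⟨compOf T σ, isComponent_compOf hσ⟩ :=
    qmap_eq_inl _ (mem_vertSet.2 ⟨σ, mem_compOf_self hσ, hv⟩)
  simp [Function.comp, h]

lemma count_mono {K : Finset (Finset V)} {s : ℕ} (r : ℕ) {T : Set (Finset V)}
    (hT : T ⊆ sSimplices K s) :
    Nat.card {col : V → Fin r // ∀ σ ∈ T, MonoE col σ} = r ^ piCard T := by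
  classical
  have hne : ∀ σ ∈ T, σ.Nonempty := fun σ hσ => nonempty_of_sSimplices (hT hσ)
  set B := ({S0 : Set (Finset V) // IsComponent T S0} ⊕ {v : V // v ∉ vertSet T}) with hB
  have hΦ : Function.Bijective
      (fun f : B → Fin r => (⟨f ∘ qmap T, mono_comp_qmap f⟩ :
        {col : V → Fin r // ∀ σ ∈ T, MonoE col σ})) := by
    constructor
    · intro f g hfg
      funext b
      obtain ⟨v, rfl⟩ := qmap_surjective hT b
      exact congrFun (congrArg Subtype.val hfg) v
    · rintro ⟨col, hcol⟩
      have hvne : ∀ (S0 : Set (Finset V)), IsComponent T S0 → (vertSet S0).Nonempty := by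
        rintro S0 ⟨σ₀, hσ₀, rfl⟩
        obtain ⟨v, hv⟩ := hne σ₀ hσ₀
        exact ⟨v, mem_vertSet.2 ⟨σ₀, mem_compOf_self hσ₀, hv⟩⟩
      refine ⟨fun b => Sum.rec (fun S0 => col (hvne S0.1 S0.2).choose)
        (fun v => col v.1) b, ?_⟩
      refine Subtype.ext (funext fun v => ?_)
      simp only [Function.comp]
      by_cases h : v ∈ vertSet T
      · obtain ⟨σv, hσv, hvσv⟩ := mem_vertSet.1 h
        have hq : qmap T v = Sum.inl ⟨compOf T σv, isComponent_compOf hσv⟩ :=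
          qmap_eq_inl _ (mem_vertSet.2 ⟨σv, mem_compOf_self hσv, hvσv⟩)
        rw [hq]
        exact const_on_component hne hcol (isComponent_compOf hσv)
          (hvne _ (isComponent_compOf hσv)).choose_spec
          (mem_vertSet.2 ⟨σv, mem_compOf_self hσv, hvσv⟩)
      · rw [qmap_eq_inr h]
  rw [← Nat.card_eq_of_bijective _ hΦ]
  have h1 : Nat.card (B → Fin r) = r ^ Nat.card B := by
    rw [Nat.card_fun, Nat.card_eq_fintype_card (α := Fin r), Fintype.card_fin]
  rw [h1]
  have h2 : Nat.card {S0 : Set (Finset V) // IsComponent T S0}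
      = Set.ncard {S0 : Set (Finset V) | IsComponent T S0} :=
    Nat.card_coe_set_eq {S0 : Set (Finset V) | IsComponent T S0}
  have h3 : Nat.card {v : V // v ∉ vertSet T} = (vertSet T)ᶜ.ncard :=
    Nat.card_coe_set_eq ((vertSet T)ᶜ)
  have h4 := Set.ncard_add_ncard_compl (vertSet T)
  rw [Nat.card_eq_fintype_card (α := V)] at h4
  have h5 : Nat.card B = piCard T := by
    rw [hB, Nat.card_sum, h2, h3, piCard]
    omega
  rw [h5]

end Count

/-- the number of (r,s)-colorings of `K` equals
`∑_{T ∈ L^s(K)} μ(∅,T)·r^{|π(T)|}`, where `μ(∅,·)` is characterized by the defining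
relations of the Möbius function of the lattice `L^s(K)`. -/
theorem stmt_9 {V : Type*} [Fintype V] [DecidableEq V]
    (K : Finset (Finset V)) (hK : ∀ σ ∈ K, ∀ τ, τ ⊆ σ → τ ∈ K)
    (r s : ℕ) (hs : 1 ≤ s)
    (μ : Set (Finset V) → ℤ)
    (hμ0 : μ ∅ = 1)
    (hμ : ∀ T ∈ LsK K s, T ≠ ∅ → ∑ᶠ S ∈ {S | S ∈ LsK K s ∧ S ⊆ T}, μ S = 0) :
    (chromCount K r s : ℤ) =
      ∑ᶠ T ∈ LsK K s, μ T * (r : ℤ) ^ piCard T := by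
  
  classical
  set LF : Finset (Set (Finset V)) := (Set.toFinite (LsK K s)).toFinset with hLF
  have hmemLF : ∀ T, T ∈ LF ↔ T ∈ LsK K s := fun T => Set.Finite.mem_toFinset _
  -- convert finsum to Finset sum
  have hfin : ∑ᶠ T ∈ LsK K s, μ T * (r : ℤ) ^ piCard T
      = ∑ T ∈ LF, μ T * (r : ℤ) ^ piCard T := by
    rw [hLF, ← finsum_mem_coe_finset, Set.Finite.coe_toFinset]
  rw [hfin]
  -- replace r^piCard T by a count of colorings
  have hN : ∀ T ∈ LF, ((r : ℤ)) ^ piCard T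
      = ((univ.filter (fun col : V → Fin r => ∀ σ ∈ T, MonoE col σ)).card : ℤ) := by
    intro T hT
    have hTs : T ⊆ sSimplices K s := ((hmemLF T).1 hT).1
    have := count_mono (K := K) r hTs
    rw [Nat.card_eq_fintype_card, Fintype.card_subtype] at this
    rw [this]
    push_cast
    ring
  rw [Finset.sum_congr rfl (fun T hT => by rw [hN T hT])]
  -- expand the filter-card as a sum of indicators and swap the sums
  have hswap : ∑ T ∈ LF, μ T *
        ((univ.filter (fun col : V → Fin r => ∀ σ ∈ T, MonoE col σ)).card : ℤ)
      = ∑ col : V → Fin r, ∑ T ∈ LF,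
          (if ∀ σ ∈ T, MonoE col σ then μ T else 0) := by
    rw [Finset.sum_comm]
    refine Finset.sum_congr rfl fun T _ => ?_
    rw [Finset.card_filter]
    push_cast
    rw [Finset.mul_sum]
    refine Finset.sum_congr rfl fun col _ => ?_
    by_cases h : ∀ σ ∈ T, MonoE col σ <;> simp [h]
  rw [hswap]
  -- evaluate the inner sum for each coloring
  have hinner : ∀ col : V → Fin r,
      ∑ T ∈ LF, (if ∀ σ ∈ T, MonoE col σ then μ T else 0)
        = if Tcol K s r col = ∅ then 1 else 0 := by
    intro col
    have hiff : ∀ T ∈ LF, ((∀ σ ∈ T, MonoE col σ) ↔ T ⊆ Tcol K s r col) := by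
      intro T hT
      exact (subset_Tcol_iff ((hmemLF T).1 hT).1).symm
    by_cases h : Tcol K s r col = ∅
    · rw [if_pos h]
      rw [Finset.sum_eq_single_of_mem ∅ ((hmemLF ∅).2 empty_mem_LsK)]
      · simp [MonoE, hμ0]
      · intro T hT hTne
        rw [if_neg]
        intro hmono
        exact hTne (Set.subset_empty_iff.1 (h ▸ (hiff T hT).1 hmono))
    · rw [if_neg h]
      have h0 := hμ (Tcol K s r col) Tcol_mem_LsK h
      have hMfin : {S | S ∈ LsK K s ∧ S ⊆ Tcol K s r col}.Finite := Set.toFinite _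
      rw [← Set.Finite.coe_toFinset hMfin, finsum_mem_coe_finset] at h0
      have e1 : ∑ T ∈ LF, (if ∀ σ ∈ T, MonoE col σ then μ T else 0)
          = ∑ T ∈ LF.filter (fun T => ∀ σ ∈ T, MonoE col σ), μ T :=
        (Finset.sum_filter _ _).symm
      rw [e1, ← h0]
      refine Finset.sum_congr ?_ fun _ _ => rfl
      ext T
      simp only [Finset.mem_filter, hmemLF, Set.Finite.mem_toFinset, Set.mem_setOf_eq]
      constructor
      · rintro ⟨h1, h2⟩; exact ⟨h1, (subset_Tcol_iff h1.1).2 h2⟩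
      · rintro ⟨h1, h2⟩; exact ⟨h1, (subset_Tcol_iff h1.1).1 h2⟩
  rw [Finset.sum_congr rfl (fun col _ => hinner col)]
  -- the sum of indicators is the number of proper colorings
  rw [Finset.sum_boole]
  congr 1
  rw [chromCount]
  have hequiv : {col : V → Fin r // ∀ σ ∈ K, σ.card = s + 1 → ¬ ∃ c, ∀ v ∈ σ, col v = c}
      ≃ {col : V → Fin r // Tcol K s r col = ∅} := by
    refine Equiv.subtypeEquivRight fun col => ?_
    rw [Set.eq_empty_iff_forall_notMem]
    constructor
    · rintro h σ ⟨h1, h2, h3⟩; exact h σ h1 h2 h3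
    · intro h σ h1 h2 h3; exact h σ ⟨h1, h2, h3⟩
  rw [Nat.card_congr hequiv, Nat.card_eq_fintype_card, Fintype.card_subtype]
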